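/- arXiv:0904.0703 — 3 statements merged into one kernel-verified Lean document; each statement's English description precedes it below -/
import Mathlib

section
/- For any μ > 0, the pseudo-inverse M† satisfies the fixed point equation M† = (I + μMᵀM)^{-1} M† + (MᵀM + μ^{-1}I)^{-1} Mᵀ. -/
open Matrix

attribute [local instance] Matrix.frobeniusNormedAddCommGroup

/-- `P` is the Moore–Penrose pseudo-inverse of `M` (the four Penrose conditions). -/
def IsMoorePenrose {m n : ℕ} (M : Matrix (Fin m) (Fin n) ℝ)
    (P : Matrix (Fin n) (Fin m) ℝ) : Prop :=
  M * P * M = M ∧ P * M * P = P ∧ (M * P)ᵀ = M * P ∧ (P * M)ᵀ = P * M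

/-!
Write `A = 1 + μ MᵀM`. The Penrose conditions `M P M = M` and `(M P)ᵀ = M P` give
`MᵀM P = Mᵀ (M P)ᵀ = (M P M)ᵀ = Mᵀ`, hence `A P = P + μ Mᵀ` and `P = A⁻¹ P + μ A⁻¹ Mᵀ`.
Since `MᵀM + μ⁻¹ I = μ⁻¹ A`, its inverse is `μ A⁻¹`. The matrix `A` is invertible because it is
positive definite for `μ ≥ 0`.
-/

namespace Matrix

variable {m n K : Type*} [Fintype n]

theorem transpose_mul_self_mul_eq_transpose [Fintype m] [CommSemiring K] {M : Matrix m n K}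
    {P : Matrix n m K} (hMPM : M * P * M = M) (hMP : (M * P)ᵀ = M * P) :
    Mᵀ * M * P = Mᵀ :=
  calc Mᵀ * M * P = Mᵀ * (M * P)ᵀ := by rw [hMP, Matrix.mul_assoc]
    _ = Mᵀ := by rw [← transpose_mul, hMPM]

theorem posDef_one_add_smul_transpose_mul_self [Fintype m] [DecidableEq n] (M : Matrix m n ℝ)
    {μ : ℝ} (hμ : 0 ≤ μ) : (1 + μ • (Mᵀ * M)).PosDef :=
  PosDef.one.add_posSemidef <| by
    simpa using (posSemidef_conjTranspose_mul_self M).smul hμ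

theorem inv_add_inv_smul_one [Field K] [DecidableEq n] (S : Matrix n n K) {μ : K}
    (hμ : μ ≠ 0) : (S + μ⁻¹ • 1)⁻¹ = μ • (1 + μ • S)⁻¹ := by
  have hfactor : S + μ⁻¹ • 1 = μ⁻¹ • (1 + μ • S) := by
    rw [smul_add, smul_smul, inv_mul_cancel₀ hμ, one_smul, add_comm]
  rw [hfactor]
  by_cases hA : IsUnit (1 + μ • S).det
  · refine inv_eq_left_inv ?_
    rw [Matrix.smul_mul, Matrix.mul_smul, smul_smul, mul_inv_cancel₀ hμ, one_smul,
      nonsing_inv_mul _ hA]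
  -- otherwise both sides are the junk value `0` of `⁻¹` on singular matrices
  · have hA' : ¬IsUnit (μ⁻¹ • (1 + μ • S)).det := by
      rw [det_smul]
      exact fun h => hA (isUnit_of_mul_isUnit_right h)
    rw [nonsing_inv_apply_not_isUnit _ hA, nonsing_inv_apply_not_isUnit _ hA', smul_zero]

theorem eq_inv_one_add_smul_mul_add [CommRing K] [DecidableEq n] {S : Matrix n n K}
    {P N : Matrix n m K} {μ : K} (hA : IsUnit (1 + μ • S).det) (hSP : S * P = N) :
    P = (1 + μ • S)⁻¹ * P + μ • (1 + μ • S)⁻¹ * N := by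
  calc P = (1 + μ • S)⁻¹ * ((1 + μ • S) * P) := by
        rw [← Matrix.mul_assoc, nonsing_inv_mul _ hA, Matrix.one_mul]
    _ = _ := by
      rw [← hSP, Matrix.add_mul, Matrix.one_mul, Matrix.mul_add, Matrix.smul_mul, Matrix.smul_mul,
        Matrix.mul_smul]

end Matrix

theorem stmt4 {m n : ℕ} (M : Matrix (Fin m) (Fin n) ℝ) (P : Matrix (Fin n) (Fin m) ℝ)
    (hP : IsMoorePenrose M P) (μ : ℝ) (hμ : 0 < μ) :
    P = (1 + μ • (Mᵀ * M))⁻¹ * P + (Mᵀ * M + μ⁻¹ • (1 : Matrix (Fin n) (Fin n) ℝ))⁻¹ * Mᵀ := by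
  obtain ⟨hMPM, -, hMP, -⟩ := hP
  have hA : IsUnit (1 + μ • (Mᵀ * M)).det :=
    (isUnit_iff_isUnit_det _).mp (posDef_one_add_smul_transpose_mul_self M hμ.le).isUnit
  rw [inv_add_inv_smul_one _ hμ.ne']
  exact eq_inv_one_add_smul_mul_add hA (transpose_mul_self_mul_eq_transpose hMPM hMP)
end

section
/- If MᵀM is positive definite with smallest eigenvalue α > 0 and μ > 0, then the map φ(Φ) = (I + μMᵀM)^{-1}Φ + (MᵀM + μ^{-1}I)^{-1}Mᵀ is a strict contraction with Lipschitz constant 1/(1 + αμ) < 1 in the Frobenius norm. -/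
/-!
Since every eigenvalue of the symmetric matrix `MᵀM` is at least `α`, the matrix
`B = I + μMᵀM` satisfies `x ⬝ Bx ≥ (1 + αμ) |x|²`, so by Cauchy–Schwarz `|Bx| ≥ (1 + αμ) |x|`.
Applied column by column this gives `‖B⁻¹X‖_F ≤ ‖X‖_F / (1 + αμ)`, and the affine term of `φ`
cancels in `φ Φ - φ Ψ = B⁻¹ (Φ - Ψ)`.
-/

open Matrix

attribute [local instance] Matrix.frobeniusNormedAddCommGroup

namespace Matrix

variable {m n : Type*} [Fintype m] [Fintype n]

section Eigenvalues

variable [DecidableEq n] {A : Matrix n n ℝ} {α : ℝ}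

theorem IsHermitian.posSemidef_sub_smul_one (hA : A.IsHermitian)
    (hα : ∀ (β : ℝ) (v : n → ℝ), v ≠ 0 → A *ᵥ v = β • v → α ≤ β) :
    (A - α • 1).PosSemidef := by
  have hC : (A - α • 1).IsHermitian := hA.sub (isHermitian_one.smul (IsSelfAdjoint.all α))
  refine hC.posSemidef_iff_eigenvalues_nonneg.mpr fun i => ?_
  set v : n → ℝ := ⇑(hC.eigenvectorBasis i)
  have hv : A *ᵥ v = (hC.eigenvalues i + α) • v := by
    have h := hC.mulVec_eigenvectorBasis i
    rw [sub_mulVec, smul_mulVec, one_mulVec, sub_eq_iff_eq_add] at h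
    rw [h, add_smul]
  have hv0 : v ≠ 0 := fun h =>
    hC.eigenvectorBasis.orthonormal.ne_zero i (by ext j; exact congrFun h j)
  show 0 ≤ hC.eigenvalues i
  linarith [hα _ v hv0 hv]

theorem IsHermitian.mul_dotProduct_self_le (hA : A.IsHermitian)
    (hα : ∀ (β : ℝ) (v : n → ℝ), v ≠ 0 → A *ᵥ v = β • v → α ≤ β) (x : n → ℝ) :
    α * (x ⬝ᵥ x) ≤ x ⬝ᵥ (A *ᵥ x) := by
  have h := (hA.posSemidef_sub_smul_one hα).dotProduct_mulVec_nonneg x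
  rw [star_trivial, sub_mulVec, smul_mulVec, one_mulVec, dotProduct_sub, dotProduct_smul,
    smul_eq_mul] at h
  linarith

end Eigenvalues

theorem dotProduct_self_nonneg (v : n → ℝ) : 0 ≤ v ⬝ᵥ v := by
  simpa only [star_trivial] using dotProduct_star_self_nonneg v

theorem frobenius_norm_sq_eq_sum_dotProduct (A : Matrix m n ℝ) :
    ‖A‖ ^ 2 = ∑ i, A i ⬝ᵥ A i := by
  rw [frobenius_norm_def, ← Real.rpow_natCast, ← Real.rpow_mul (by positivity)]
  norm_num [dotProduct, sq]

section Coercive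

variable {B : Matrix n n ℝ} {c : ℝ}

theorem sq_mul_dotProduct_self_le_of_coercive (hB : ∀ x, c * (x ⬝ᵥ x) ≤ x ⬝ᵥ (B *ᵥ x))
    (hc : 0 ≤ c) (x : n → ℝ) :
    c ^ 2 * (x ⬝ᵥ x) ≤ (B *ᵥ x) ⬝ᵥ (B *ᵥ x) := by
  have hcs : (x ⬝ᵥ B *ᵥ x) ^ 2 ≤ (x ⬝ᵥ x) * ((B *ᵥ x) ⬝ᵥ (B *ᵥ x)) := by
    simpa only [dotProduct, sq] using Finset.sum_mul_sq_le_sq_mul_sq Finset.univ x (B *ᵥ x)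
  have hsq : (c * (x ⬝ᵥ x)) ^ 2 ≤ (x ⬝ᵥ B *ᵥ x) ^ 2 :=
    pow_le_pow_left₀ (mul_nonneg hc (dotProduct_self_nonneg x)) (hB x) 2
  rcases (dotProduct_self_nonneg x).eq_or_lt with hx | hx
  · rw [← hx, mul_zero]
    exact dotProduct_self_nonneg _
  · nlinarith

theorem mul_frobenius_norm_le_of_coercive (hB : ∀ x, c * (x ⬝ᵥ x) ≤ x ⬝ᵥ (B *ᵥ x))
    (hc : 0 ≤ c) (D : Matrix n m ℝ) :
    c * ‖D‖ ≤ ‖B * D‖ := by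
  have hcol : ∀ j, (B * D)ᵀ j = B *ᵥ Dᵀ j := fun j => by
    ext i; simp [mul_apply, mulVec, dotProduct]
  have hsq : (c * ‖D‖) ^ 2 ≤ ‖B * D‖ ^ 2 := by
    rw [mul_pow, ← frobenius_norm_transpose D, ← frobenius_norm_transpose (B * D),
      frobenius_norm_sq_eq_sum_dotProduct, frobenius_norm_sq_eq_sum_dotProduct, Finset.mul_sum]
    exact Finset.sum_le_sum fun j _ => hcol j ▸ sq_mul_dotProduct_self_le_of_coercive hB hc _
  exact (pow_le_pow_iff_left₀ (by positivity) (norm_nonneg _) two_ne_zero).1 hsq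

theorem isUnit_det_of_coercive [DecidableEq n] (hB : ∀ x, c * (x ⬝ᵥ x) ≤ x ⬝ᵥ (B *ᵥ x))
    (hc : 0 < c) : IsUnit B.det := by
  refine isUnit_iff_ne_zero.2 fun hdet => ?_
  obtain ⟨v, hv0, hBv⟩ := exists_mulVec_eq_zero_iff.2 hdet
  have hv : 0 < v ⬝ᵥ v := (dotProduct_self_nonneg v).lt_of_ne' (dotProduct_self_eq_zero.not.2 hv0)
  have hle := hB v
  rw [hBv, dotProduct_zero] at hle
  exact (mul_pos hc hv).not_ge hle

theorem frobenius_norm_inv_mul_le_of_coercive [DecidableEq n]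
    (hB : ∀ x, c * (x ⬝ᵥ x) ≤ x ⬝ᵥ (B *ᵥ x)) (hc : 0 < c) (X : Matrix n m ℝ) :
    ‖B⁻¹ * X‖ ≤ c⁻¹ * ‖X‖ := by
  rw [le_inv_mul_iff₀ hc]
  simpa [← Matrix.mul_assoc, mul_nonsing_inv B (isUnit_det_of_coercive hB hc)] using
    mul_frobenius_norm_le_of_coercive hB hc.le (B⁻¹ * X)

end Coercive

end Matrix

theorem stmt7_general {m n : ℕ} (M : Matrix (Fin m) (Fin n) ℝ)
    (α μ : ℝ) (hα : 0 < α) (hμ : 0 < μ)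
    (hmin : ∀ (β : ℝ) (v : Fin n → ℝ), v ≠ 0 → (Mᵀ * M) *ᵥ v = β • v → α ≤ β) :
    (1 : ℝ) / (1 + α * μ) < 1 ∧
    ∀ Φ Ψ : Matrix (Fin n) (Fin m) ℝ,
      ‖((1 + μ • (Mᵀ * M))⁻¹ * Φ + (Mᵀ * M + μ⁻¹ • 1)⁻¹ * Mᵀ)
          - ((1 + μ • (Mᵀ * M))⁻¹ * Ψ + (Mᵀ * M + μ⁻¹ • 1)⁻¹ * Mᵀ)‖
        ≤ (1 / (1 + α * μ)) * ‖Φ - Ψ‖ := by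
  have hA : (Mᵀ * M).IsHermitian := by
    simpa only [conjTranspose_eq_transpose_of_trivial] using isHermitian_conjTranspose_mul_self M
  have hcoercive : ∀ x, (1 + α * μ) * (x ⬝ᵥ x) ≤ x ⬝ᵥ ((1 + μ • (Mᵀ * M)) *ᵥ x) := fun x => by
    have h := hA.mul_dotProduct_self_le hmin x
    rw [add_mulVec, one_mulVec, smul_mulVec, dotProduct_add, dotProduct_smul, smul_eq_mul]
    nlinarith
  have hden : 0 < 1 + α * μ := by positivity
  refine ⟨(div_lt_one hden).2 (by nlinarith), fun Φ Ψ => ?_⟩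
  rw [add_sub_add_right_eq_sub, ← Matrix.mul_sub, one_div]
  exact frobenius_norm_inv_mul_le_of_coercive hcoercive hden _

theorem stmt7 {m n : ℕ} (M : Matrix (Fin m) (Fin n) ℝ)
    (hpd : (Mᵀ * M).PosDef) (α μ : ℝ) (hα : 0 < α) (hμ : 0 < μ)
    (heig : ∃ v : Fin n → ℝ, v ≠ 0 ∧ (Mᵀ * M) *ᵥ v = α • v)
    (hmin : ∀ (β : ℝ) (v : Fin n → ℝ), v ≠ 0 → (Mᵀ * M) *ᵥ v = β • v → α ≤ β) :
    (1 : ℝ) / (1 + α * μ) < 1 ∧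
    ∀ Φ Ψ : Matrix (Fin n) (Fin m) ℝ,
      ‖((1 + μ • (Mᵀ * M))⁻¹ * Φ + (Mᵀ * M + μ⁻¹ • 1)⁻¹ * Mᵀ)
          - ((1 + μ • (Mᵀ * M))⁻¹ * Ψ + (Mᵀ * M + μ⁻¹ • 1)⁻¹ * Mᵀ)‖
        ≤ (1 / (1 + α * μ)) * ‖Φ - Ψ‖ :=
  stmt7_general M α μ hα hμ hmin
end

section
/- Let α₁ be the smallest nonzero eigenvalue of MᵀM (assumed to exist, i.e., M ≠ 0). Then for every Φ ∈ ℝ^{n×m}, the Frobenius distance from Φ to the solution set S = M† + ker(Φ ↦ MΦ) satisfies dist_F(Φ, S) ≤ (1/α₁)‖Mᵀ(MΦ − I)‖_F. -/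
open Matrix

attribute [local instance] Matrix.frobeniusNormedAddCommGroup

/-!
The point `Φ - P (MΦ - 1)` lies in the solution set because `M P M = M`, so the distance is at
most `‖P (MΦ - 1)‖`. Column by column, `P x` is orthogonal to `ker M = ker (MᵀM)`, and on that
subspace the symmetric matrix `MᵀM` stretches every vector by at least its smallest nonzero
eigenvalue `α₁` (expand in an orthonormal eigenbasis). Since `MᵀM P x = Mᵀ x`, this gives
`α₁ ‖P x‖ ≤ ‖Mᵀ x‖`.
-/

namespace Matrix

variable {ι κ : Type*}

theorem frobenius_norm_sq_eq_sum_dotProduct_col [Fintype ι] [Fintype κ] (A : Matrix κ ι ℝ) :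
    ‖A‖ ^ 2 = ∑ j, Aᵀ j ⬝ᵥ Aᵀ j := by
  rw [← frobenius_norm_transpose]
  change ‖WithLp.toLp 2 fun j => WithLp.toLp 2 (Aᵀ j)‖ ^ 2 = _
  rw [PiLp.norm_sq_eq_of_L2]
  refine Finset.sum_congr rfl fun j _ => ?_
  rw [EuclideanSpace.real_norm_sq_eq]
  simp only [dotProduct, sq]

theorem mul_frobenius_norm_le_of_col [Fintype ι] [Fintype κ] {c : ℝ} (hc : 0 ≤ c)
    {A B : Matrix κ ι ℝ} (h : ∀ j, c ^ 2 * (Aᵀ j ⬝ᵥ Aᵀ j) ≤ Bᵀ j ⬝ᵥ Bᵀ j) : c * ‖A‖ ≤ ‖B‖ := by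
  refine (pow_le_pow_iff_left₀ (by positivity) (norm_nonneg B) two_ne_zero).mp ?_
  rw [mul_pow, frobenius_norm_sq_eq_sum_dotProduct_col, frobenius_norm_sq_eq_sum_dotProduct_col,
    Finset.mul_sum]
  exact Finset.sum_le_sum fun j _ => h j

theorem nonneg_of_transpose_mul_self_mulVec_eq_smul [Fintype ι] [Fintype κ] (M : Matrix κ ι ℝ)
    {α : ℝ} {v : ι → ℝ} (hv0 : v ≠ 0) (hv : (Mᵀ * M) *ᵥ v = α • v) : 0 ≤ α := by
  have hpsd := (posSemidef_conjTranspose_mul_self M).dotProduct_mulVec_nonneg v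
  rw [conjTranspose_eq_transpose_of_trivial, hv, dotProduct_smul, smul_eq_mul] at hpsd
  exact nonneg_of_mul_nonneg_left hpsd (dotProduct_self_star_pos_iff.mpr hv0)

theorem isHermitian_transpose_mul_self [Fintype κ] (M : Matrix κ ι ℝ) : (Mᵀ * M).IsHermitian := by
  simpa only [conjTranspose_eq_transpose_of_trivial] using isHermitian_conjTranspose_mul_self M

theorem IsHermitian.dotProduct_self_eq_sum_sq [Fintype ι] [DecidableEq ι] {A : Matrix ι ι ℝ}
    (hA : A.IsHermitian) (x : ι → ℝ) :
    x ⬝ᵥ x = ∑ i, (⇑(hA.eigenvectorBasis i) ⬝ᵥ x) ^ 2 := by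
  have := hA.eigenvectorBasis.sum_sq_inner_right (WithLp.toLp 2 x)
  rw [EuclideanSpace.real_norm_sq_eq] at this
  simpa [EuclideanSpace.inner_eq_star_dotProduct, dotProduct, sq, mul_comm] using this.symm

theorem IsHermitian.sq_mul_dotProduct_self_le [Fintype ι] [DecidableEq ι] {A : Matrix ι ι ℝ}
    (hA : A.IsHermitian) {α : ℝ} (hα : 0 ≤ α)
    (hmin : ∀ (β : ℝ) (v : ι → ℝ), v ≠ 0 → A *ᵥ v = β • v → β ≠ 0 → α ≤ β) {w : ι → ℝ}
    (hw : ∀ v, A *ᵥ v = 0 → v ⬝ᵥ w = 0) :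
    α ^ 2 * (w ⬝ᵥ w) ≤ (A *ᵥ w) ⬝ᵥ (A *ᵥ w) := by
  set b := hA.eigenvectorBasis
  set lam := hA.eigenvalues
  have hb : ∀ i, A *ᵥ ⇑(b i) = lam i • ⇑(b i) := hA.mulVec_eigenvectorBasis
  have coeff : ∀ i, ⇑(b i) ⬝ᵥ (A *ᵥ w) = lam i * (⇑(b i) ⬝ᵥ w) := fun i => by
    rw [dotProduct_mulVec, ← mulVec_transpose, ← conjTranspose_eq_transpose_of_trivial, hA.eq,
      hb, smul_dotProduct, smul_eq_mul]
  rw [hA.dotProduct_self_eq_sum_sq w, hA.dotProduct_self_eq_sum_sq (A *ᵥ w), Finset.mul_sum]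
  refine Finset.sum_le_sum fun i _ => ?_
  rw [coeff, mul_pow]
  by_cases hlam : lam i = 0
  · rw [hw _ (by rw [hb, hlam, zero_smul])]
    simp
  · have hbi : ⇑(b i) ≠ 0 := fun h => b.orthonormal.ne_zero i (by ext k; exact congrFun h k)
    gcongr
    exact hmin (lam i) _ hbi (hb i) hlam

end Matrix

namespace IsMoorePenrose

variable {m n : ℕ} {M : Matrix (Fin m) (Fin n) ℝ} {P : Matrix (Fin n) (Fin m) ℝ}

theorem transpose_mul_self_mul (hP : IsMoorePenrose M P) : Mᵀ * M * P = Mᵀ := by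
  obtain ⟨hMPM, -, hMP, -⟩ := hP
  rw [Matrix.mul_assoc, ← hMP, ← transpose_mul, hMPM]

theorem dotProduct_mulVec_eq_zero (hP : IsMoorePenrose M P) {v : Fin n → ℝ} (hv : M *ᵥ v = 0)
    (x : Fin m → ℝ) : v ⬝ᵥ (P *ᵥ x) = 0 := by
  obtain ⟨-, hPMP, -, hPM⟩ := hP
  rw [← hPMP, ← mulVec_mulVec, dotProduct_mulVec, ← mulVec_transpose, hPM, ← mulVec_mulVec, hv,
    mulVec_zero, zero_dotProduct]

theorem sq_mul_dotProduct_self_le (hP : IsMoorePenrose M P) {α : ℝ} (hα : 0 ≤ α)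
    (hmin : ∀ (β : ℝ) (v : Fin n → ℝ), v ≠ 0 → (Mᵀ * M) *ᵥ v = β • v → β ≠ 0 → α ≤ β)
    (x : Fin m → ℝ) : α ^ 2 * ((P *ᵥ x) ⬝ᵥ (P *ᵥ x)) ≤ (Mᵀ *ᵥ x) ⬝ᵥ (Mᵀ *ᵥ x) := by
  have hker : ∀ v, (Mᵀ * M) *ᵥ v = 0 → M *ᵥ v = 0 := fun v =>
    (SetLike.ext_iff.mp (ker_mulVecLin_transpose_mul_self M) v).mp
  have := (isHermitian_transpose_mul_self M).sq_mul_dotProduct_self_le hα hmin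
    fun v hv => hP.dotProduct_mulVec_eq_zero (hker v hv) x
  rwa [mulVec_mulVec, hP.transpose_mul_self_mul] at this

theorem mul_norm_mul_le {ι : Type*} [Fintype ι] (hP : IsMoorePenrose M P) {α : ℝ} (hα : 0 ≤ α)
    (hmin : ∀ (β : ℝ) (v : Fin n → ℝ), v ≠ 0 → (Mᵀ * M) *ᵥ v = β • v → β ≠ 0 → α ≤ β)
    (X : Matrix (Fin m) ι ℝ) : α * ‖P * X‖ ≤ ‖Mᵀ * X‖ :=
  mul_frobenius_norm_le_of_col hα fun j => hP.sq_mul_dotProduct_self_le hα hmin (Xᵀ j)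

end IsMoorePenrose

theorem stmt14_general {m n : ℕ} (M : Matrix (Fin m) (Fin n) ℝ)
    (P : Matrix (Fin n) (Fin m) ℝ) (hP : IsMoorePenrose M P) (α₁ : ℝ) (hα₁ : α₁ ≠ 0)
    (heig : ∃ v : Fin n → ℝ, v ≠ 0 ∧ (Mᵀ * M) *ᵥ v = α₁ • v)
    (hmin : ∀ (β : ℝ) (v : Fin n → ℝ), v ≠ 0 → (Mᵀ * M) *ᵥ v = β • v → β ≠ 0 → α₁ ≤ β) :
    ∀ Φ : Matrix (Fin n) (Fin m) ℝ,
      Metric.infDist Φ {Ψ : Matrix (Fin n) (Fin m) ℝ | ∃ K : Matrix (Fin n) (Fin m) ℝ, M * K = 0 ∧ Ψ = P + K}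
        ≤ (1 / α₁) * ‖Mᵀ * (M * Φ - 1)‖ := by
  intro Φ
  obtain ⟨v, hv0, hv⟩ := heig
  have hα : 0 < α₁ := (nonneg_of_transpose_mul_self_mulVec_eq_smul M hv0 hv).lt_of_ne' hα₁
  have hmem : ∃ K : Matrix (Fin n) (Fin m) ℝ, M * K = 0 ∧ Φ - P * (M * Φ - 1) = P + K := by
    refine ⟨Φ - P * (M * Φ), ?_, ?_⟩
    · rw [Matrix.mul_sub, ← Matrix.mul_assoc, ← Matrix.mul_assoc, hP.1, sub_self]
    · rw [Matrix.mul_sub, Matrix.mul_one]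
      abel
  calc Metric.infDist Φ _ ≤ dist Φ (Φ - P * (M * Φ - 1)) := Metric.infDist_le_dist_of_mem hmem
    _ = ‖P * (M * Φ - 1)‖ := by rw [dist_eq_norm, sub_sub_cancel]
    _ ≤ (1 / α₁) * ‖Mᵀ * (M * Φ - 1)‖ := by
      rw [one_div_mul_eq_div, le_div_iff₀ hα, mul_comm]
      exact hP.mul_norm_mul_le hα.le hmin _

theorem stmt14 {m n : ℕ} (M : Matrix (Fin m) (Fin n) ℝ) (hM : M ≠ 0)
    (P : Matrix (Fin n) (Fin m) ℝ) (hP : IsMoorePenrose M P) (α₁ : ℝ) (hα₁ : α₁ ≠ 0)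
    (heig : ∃ v : Fin n → ℝ, v ≠ 0 ∧ (Mᵀ * M) *ᵥ v = α₁ • v)
    (hmin : ∀ (β : ℝ) (v : Fin n → ℝ), v ≠ 0 → (Mᵀ * M) *ᵥ v = β • v → β ≠ 0 → α₁ ≤ β) :
    ∀ Φ : Matrix (Fin n) (Fin m) ℝ,
      Metric.infDist Φ {Ψ : Matrix (Fin n) (Fin m) ℝ | ∃ K : Matrix (Fin n) (Fin m) ℝ, M * K = 0 ∧ Ψ = P + K}
        ≤ (1 / α₁) * ‖Mᵀ * (M * Φ - 1)‖ :=
  stmt14_general M P hP α₁ hα₁ heig hmin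
end
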